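/- arXiv:0706.1068 — 4 statements merged into one kernel-verified Lean document; each statement's English description precedes it below -/
import Mathlib

section
/- Let R be a commutative ring, K a type, and λ ∈ ℤ. Consider the ring of divided power series R[[K]]: its elements are functions f : (K →₀ ℕ) → R (functions on finitely supported maps m : K → ℕ), with product (f·g)(m) = Σ_{m₁+m₂=m} (Π_{i ∈ supp(m)} C(m(i), m₁(i))) · f(m₁) · g(m₂), the sum being over the finitely many pairs (m₁, m₂) of finitely supported maps with m₁ + m₂ = m, and C(a,b) the usual binomial coefficient. If p : R → R is an additive map satisfying the weight-λ Rota-Baxter identity p(x)p(y) = p(p(x)y) + p(x p(y)) + λ·p(xy), then the coefficientwise operator P(f) = p ∘ f satisfies the weight-λ Rota-Baxter identity on R[[K]]: P(f)·P(g) = P(P(f)·g) + P(f·P(g)) + λ·P(f·g). -/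
/-!
Every coefficient of a binomial convolution is a sum of terms `n • (a * b)` with `n : ℕ`.
An additive map commutes with `n • ·`, so the Rota-Baxter identity for `p`, applied to each
pair `(a, b)` and scaled by `n`, sums up to the Rota-Baxter identity for `p ∘ ·`.
-/

/-- The binomial convolution product on the ring `R[[K]]` of formal divided power
series, whose elements are functions `(K →₀ ℕ) → R`. -/
noncomputable def dpMul {R : Type*} [CommRing R] {K : Type*} [DecidableEq K]
    (f g : (K →₀ ℕ) → R) : (K →₀ ℕ) → R :=
  fun m => ∑ q ∈ Finset.HasAntidiagonal.antidiagonal m,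
    (∏ i ∈ m.support, (Nat.choose (m i) (q.1 i) : R)) * f q.1 * g q.2

def IsRotaBaxter {R : Type*} [Ring R] (lam : ℤ) (p : R →+ R) : Prop :=
  ∀ x y : R, p x * p y = p (p x * y) + p (x * p y) + lam • p (x * y)

theorem IsRotaBaxter.nsmul {R : Type*} [Ring R] {lam : ℤ} {p : R →+ R}
    (hp : IsRotaBaxter lam p) (n : ℕ) (x y : R) :
    n • (p x * p y) = p (n • (p x * y)) + p (n • (x * p y)) + lam • p (n • (x * y)) := by
  rw [hp, map_nsmul, map_nsmul, map_nsmul, smul_comm lam n, smul_add, smul_add]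

theorem dpMul_apply_eq_sum_nsmul {R : Type*} [CommRing R] {K : Type*} [DecidableEq K]
    (f g : (K →₀ ℕ) → R) (m : K →₀ ℕ) :
    dpMul f g m = ∑ q ∈ Finset.HasAntidiagonal.antidiagonal m,
      (∏ i ∈ m.support, (m i).choose (q.1 i)) • (f q.1 * g q.2) := by
  simp only [dpMul, nsmul_eq_mul, Nat.cast_prod, mul_assoc]

/-- If `p` is an additive Rota-Baxter operator of weight `λ` on a commutative ring `R`,
then the coefficientwise operator `P(f) = p ∘ f` is a Rota-Baxter operator of weight `λ`
on the divided power series ring `R[[K]]`. -/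
theorem dividedPowerSeries_rotaBaxter {R : Type*} [CommRing R] {K : Type*} [DecidableEq K]
    (lam : ℤ) (p : R →+ R)
    (hp : ∀ x y : R, p x * p y = p (p x * y) + p (x * p y) + lam • p (x * y))
    (f g : (K →₀ ℕ) → R) :
    dpMul (p ∘ f) (p ∘ g) =
      (p ∘ dpMul (p ∘ f) g) + (p ∘ dpMul f (p ∘ g)) + lam • (p ∘ dpMul f g) := by
  funext m
  simp only [dpMul_apply_eq_sum_nsmul, Pi.add_apply, Pi.smul_apply, Function.comp_apply,
    map_sum, Finset.smul_sum, ← Finset.sum_add_distrib]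
  exact Finset.sum_congr rfl fun q _ => IsRotaBaxter.nsmul hp _ _ _
end

section
/- Let k be a commutative ring, C a k-coalgebra with comultiplication Δ : C → C ⊗ C, and A an associative k-algebra. For k-linear maps f, g : C → A define their convolution f ⋆ g = μ ∘ (f ⊗ g) ∘ Δ, where μ : A ⊗ A → A is the multiplication. Let λ ∈ ℤ and let p : A → A be a k-linear map satisfying the weight-λ Rota-Baxter identity p(a)p(b) = p(p(a)b) + p(a p(b)) + λ·p(ab) for all a, b ∈ A. Then the operator P(f) = p ∘ f on Hom_k(C, A) satisfies the weight-λ Rota-Baxter identity with respect to convolution: P(f) ⋆ P(g) = P(P(f) ⋆ g) + P(f ⋆ P(g)) + λ·P(f ⋆ g) for all k-linear f, g : C → A. -/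
open TensorProduct

/-- The convolution product `f ⋆ g = μ ∘ (f ⊗ g) ∘ Δ` on `Hom_k(C, A)` for a
`k`-coalgebra `C` and a `k`-algebra `A`. -/
noncomputable def convProd {k : Type*} [CommRing k]
    {C : Type*} [AddCommMonoid C] [Module k C] [Coalgebra k C]
    {A : Type*} [Ring A] [Algebra k A]
    (f g : C →ₗ[k] A) : C →ₗ[k] A :=
  (LinearMap.mul' k A).comp ((TensorProduct.map f g).comp (Coalgebra.comul (R := k)))

/-- If `p : A → A` is a `k`-linear Rota-Baxter operator of weight `λ` on a
`k`-algebra `A`, then `P(f) = p ∘ f` is a Rota-Baxter operator of weight `λ`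
on `Hom_k(C, A)` with the convolution product. -/
theorem convolution_rotaBaxter {k : Type*} [CommRing k]
    {C : Type*} [AddCommMonoid C] [Module k C] [Coalgebra k C]
    {A : Type*} [Ring A] [Algebra k A]
    (lam : ℤ) (p : A →ₗ[k] A)
    (hp : ∀ a b : A, p a * p b = p (p a * b) + p (a * p b) + lam • p (a * b))
    (f g : C →ₗ[k] A) :
    convProd (p ∘ₗ f) (p ∘ₗ g) =
      p ∘ₗ convProd (p ∘ₗ f) g + p ∘ₗ convProd f (p ∘ₗ g) +
        lam • (p ∘ₗ convProd f g) := by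
  have key : (LinearMap.mul' k A).comp (TensorProduct.map (p ∘ₗ f) (p ∘ₗ g)) =
      p ∘ₗ ((LinearMap.mul' k A).comp (TensorProduct.map (p ∘ₗ f) g)) +
      p ∘ₗ ((LinearMap.mul' k A).comp (TensorProduct.map f (p ∘ₗ g))) +
      lam • (p ∘ₗ ((LinearMap.mul' k A).comp (TensorProduct.map f g))) := by
    apply TensorProduct.ext'
    intro a b
    simp [hp (f a) (g b)]
  ext c
  have := congrArg (fun (h : C ⊗[k] C →ₗ[k] A) => h (Coalgebra.comul (R := k) c)) key
  simpa [convProd, LinearMap.comp_assoc] using this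
end

section
/- Let R be a (not necessarily commutative) ring and let p : R → R be an additive map satisfying the weight-0 Rota-Baxter identity p(x)p(y) = p(p(x)y) + p(x p(y)) for all x, y ∈ R. Then for all integers a, b ≥ 1 and all x, y ∈ R: p^a(x)·p^b(y) = Σ_{i=1}^{a} C(b−1+a−i, b−1) • p^{a+b−i}(p^i(x)·y) + Σ_{i=1}^{b} C(a−1+b−i, a−1) • p^{a+b−i}(x·p^i(y)), where p^k denotes the k-fold iterate of p, C(·,·) is the binomial coefficient, and n • r denotes the sum of n copies of r. -/
open Finset

private lemma rb_key {R : Type*} [Ring R] (p : R →+ R)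
    (hp : ∀ x y : R, p x * p y = p (p x * y) + p (x * p y)) (A B : ℕ) (x y : R) :
    (⇑p)^[A+1] x * (⇑p)^[B+1] y =
      p ((⇑p)^[A+1] x * (⇑p)^[B] y) + p ((⇑p)^[A] x * (⇑p)^[B+1] y) := by
  have := hp ((⇑p)^[A] x) ((⇑p)^[B] y)
  rwa [← Function.iterate_succ_apply' p A x, ← Function.iterate_succ_apply' p B y] at this

private lemma rb_aux {R : Type*} [Ring R] (p : R →+ R)
    (hp : ∀ x y : R, p x * p y = p (p x * y) + p (x * p y)) :
    ∀ n A B, A + B = n → ∀ x y : R,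
      (⇑p)^[A+1] x * (⇑p)^[B+1] y =
        (∑ j ∈ range (A+1), (B + j).choose B • (⇑p)^[B+1+j] ((⇑p)^[A+1-j] x * y)) +
        (∑ j ∈ range (B+1), (A + j).choose A • (⇑p)^[A+1+j] (x * (⇑p)^[B+1-j] y)) := by
  intro n
  induction n using Nat.strong_induction_on with
  | _ n ih =>
    intro A B hAB x y
    rw [rb_key p hp]
    match A, B with
    | 0, 0 =>
      simp [hp]
    | 0, B+1 =>
      rw [ih B (by omega) 0 B (by omega)]
      simp only [map_add, map_sum, map_nsmul, ← Function.iterate_succ_apply']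
      rw [Finset.sum_range_succ' _ (B+1)]
      simp [Nat.succ_sub_succ]
      simp only [← Function.iterate_succ_apply]
      simp [add_assoc]
    | A+1, 0 =>
      rw [ih A (by omega) A 0 (by omega)]
      simp only [map_add, map_sum, map_nsmul, ← Function.iterate_succ_apply']
      rw [Finset.sum_range_succ' _ (A+1)]
      simp [Nat.succ_sub_succ]
      simp only [← Function.iterate_succ_apply]
      simp [add_assoc]
      abel
    | A+1, B+1 =>
      rw [ih (A+1+B) (by omega) (A+1) B (by omega), ih (A+(B+1)) (by omega) A (B+1) (by omega)]
      simp only [map_add, map_sum, map_nsmul, ← Function.iterate_succ_apply']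
      have pascalB : ∀ j, (B+1+j).choose (B+1) = (B+j).choose B + (B+j).choose (B+1) := by
        intro j; rw [show B+1+j = (B+j)+1 from by omega]; exact Nat.choose_succ_succ _ _
      have pascalA : ∀ j, (A+1+j).choose (A+1) = (A+j).choose A + (A+j).choose (A+1) := by
        intro j; rw [show A+1+j = (A+j)+1 from by omega]; exact Nat.choose_succ_succ _ _
      conv_rhs => simp only [pascalB, pascalA, add_nsmul, Finset.sum_add_distrib]
      rw [Finset.sum_range_succ' (fun i => (B + i).choose (B + 1) • (⇑p)^[B + 1 + 1 + i] ((⇑p)^[A + 1 + 1 - i] x * y)) (A + 1),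
        Finset.sum_range_succ' (fun i => (A + i).choose (A + 1) • (⇑p)^[A + 1 + 1 + i] (x * (⇑p)^[B + 1 + 1 - i] y)) (B + 1)]
      have h1 : ∑ i ∈ Finset.range (A + 1 + 1),
            (B + i).choose B • (⇑p)^[(B + 1 + i).succ] ((⇑p)^[A + 1 + 1 - i] x * y) =
          ∑ i ∈ Finset.range (A + 1 + 1),
            (B + i).choose B • (⇑p)^[B + 1 + 1 + i] ((⇑p)^[A + 1 + 1 - i] x * y) :=
        Finset.sum_congr rfl fun i _ => by rw [show (B + 1 + i).succ = B + 1 + 1 + i from by omega]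
      have h2 : ∑ i ∈ Finset.range (B + 1),
            (A + 1 + i).choose (A + 1) • (⇑p)^[(A + 1 + 1 + i).succ] (x * (⇑p)^[B + 1 - i] y) =
          ∑ i ∈ Finset.range (B + 1),
            (A + (i + 1)).choose (A + 1) • (⇑p)^[A + 1 + 1 + (i + 1)] (x * (⇑p)^[B + 1 + 1 - (i + 1)] y) :=
        Finset.sum_congr rfl fun i _ => by
          rw [show A + 1 + i = A + (i + 1) from by omega,
            show (A + 1 + 1 + i).succ = A + 1 + 1 + (i + 1) from by omega,
            show B + 1 - i = B + 1 + 1 - (i + 1) from by omega]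
      have h3 : ∑ i ∈ Finset.range (A + 1),
            (B + 1 + i).choose (B + 1) • (⇑p)^[(B + 1 + 1 + i).succ] ((⇑p)^[A + 1 - i] x * y) =
          ∑ i ∈ Finset.range (A + 1),
            (B + (i + 1)).choose (B + 1) • (⇑p)^[B + 1 + 1 + (i + 1)] ((⇑p)^[A + 1 + 1 - (i + 1)] x * y) :=
        Finset.sum_congr rfl fun i _ => by
          rw [show B + 1 + i = B + (i + 1) from by omega,
            show (B + 1 + 1 + i).succ = B + 1 + 1 + (i + 1) from by omega,
            show A + 1 - i = A + 1 + 1 - (i + 1) from by omega]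
      have h4 : ∑ i ∈ Finset.range (B + 1 + 1),
            (A + i).choose A • (⇑p)^[(A + 1 + i).succ] (x * (⇑p)^[B + 1 + 1 - i] y) =
          ∑ i ∈ Finset.range (B + 1 + 1),
            (A + i).choose A • (⇑p)^[A + 1 + 1 + i] (x * (⇑p)^[B + 1 + 1 - i] y) :=
        Finset.sum_congr rfl fun i _ => by rw [show (A + 1 + i).succ = A + 1 + 1 + i from by omega]
      rw [h1, h2, h3, h4]
      simp only [Nat.add_zero, Nat.choose_succ_self, zero_smul, add_zero, Nat.sub_zero]
      abel

/-- In a ring with an additive Rota-Baxter operator `p` of weight `0`, the iterated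
identity
`p^a(x) p^b(y) = Σ_{i=1}^a C(b-1+a-i, b-1) • p^{a+b-i}(p^i(x) y)
               + Σ_{i=1}^b C(a-1+b-i, a-1) • p^{a+b-i}(x p^i(y))` holds. -/
theorem iterated_rotaBaxter_weight_zero {R : Type*} [Ring R] (p : R →+ R)
    (hp : ∀ x y : R, p x * p y = p (p x * y) + p (x * p y))
    (a b : ℕ) (ha : 1 ≤ a) (hb : 1 ≤ b) (x y : R) :
    (⇑p)^[a] x * (⇑p)^[b] y =
      (∑ i ∈ Finset.Icc 1 a,
        Nat.choose (b - 1 + a - i) (b - 1) • (⇑p)^[a + b - i] ((⇑p)^[i] x * y)) +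
      (∑ i ∈ Finset.Icc 1 b,
        Nat.choose (a - 1 + b - i) (a - 1) • (⇑p)^[a + b - i] (x * (⇑p)^[i] y)) := by
  obtain ⟨A, rfl⟩ : ∃ A, a = A + 1 := ⟨a - 1, by omega⟩
  obtain ⟨B, rfl⟩ : ∃ B, b = B + 1 := ⟨b - 1, by omega⟩
  rw [rb_aux p hp (A + B) A B rfl x y]
  congr 1
  · rw [show Finset.Icc 1 (A+1) = Finset.Ico 1 (A+2) from (Finset.Ico_add_one_right_eq_Icc 1 (A+1)).symm,
      Finset.sum_Ico_eq_sum_range, show A + 2 - 1 = A + 1 from rfl, ← Finset.sum_range_reflect]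
    apply Finset.sum_congr rfl
    intro j hj
    simp only [Finset.mem_range] at hj
    have e1 : B + (A + 1 - 1 - j) = B + 1 - 1 + (A + 1) - (1 + j) := by omega
    have e2 : B + 1 + (A + 1 - 1 - j) = A + 1 + (B + 1) - (1 + j) := by omega
    have e3 : A + 1 - (A + 1 - 1 - j) = 1 + j := by omega
    rw [e1, e2, e3]
    norm_num
  · rw [show Finset.Icc 1 (B+1) = Finset.Ico 1 (B+2) from (Finset.Ico_add_one_right_eq_Icc 1 (B+1)).symm,
      Finset.sum_Ico_eq_sum_range, show B + 2 - 1 = B + 1 from rfl, ← Finset.sum_range_reflect]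
    apply Finset.sum_congr rfl
    intro j hj
    simp only [Finset.mem_range] at hj
    have e1 : A + (B + 1 - 1 - j) = A + 1 - 1 + (B + 1) - (1 + j) := by omega
    have e2 : A + 1 + (B + 1 - 1 - j) = A + 1 + (B + 1) - (1 + j) := by omega
    have e3 : B + 1 - (B + 1 - 1 - j) = 1 + j := by omega
    rw [e1, e2, e3]
    norm_num
end

section
/- Let R be a commutative ring and q ∈ R. On sequences f : ℕ → R consider the q-binomial convolution product (f·g)(n) = Σ_{k=0}^n [n,k]_q·f(k)·g(n−k), where [n,k]_q are the Gaussian binomial coefficients. Define the q-integration operator (∫_q f)(0) = 0, (∫_q f)(n) = f(n−1) for n ≥ 1, and the shift operator (s_q f)(n) = qⁿ·f(n). Then the twisted Rota-Baxter identity holds: (∫_q f)·(∫_q g) = ∫_q((∫_q f)·g) + ∫_q(f·s_q(∫_q g)) for all sequences f, g : ℕ → R. -/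
/-- The Gaussian (`q`-)binomial coefficients `[n, k]_q` in a commutative ring,
defined by the `q`-Pascal recursion. -/
def qbinom {R : Type*} [CommRing R] (q : R) : ℕ → ℕ → R
  | _, 0 => 1
  | 0, _ + 1 => 0
  | n + 1, k + 1 => qbinom q n (k + 1) + q ^ (n - k) * qbinom q n k

/-- The `q`-binomial convolution product on sequences `ℕ → R`, corresponding to the
product of `q`-divided power series `Σ f(n) xⁿ/[n]_q!`. -/
def qconv {R : Type*} [CommRing R] (q : R) (f g : ℕ → R) : ℕ → R :=
  fun n => ∑ k ∈ Finset.range (n + 1), qbinom q n k * f k * g (n - k)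

/-- The `q`-integration operator `∫_q`. -/
def qint {R : Type*} [CommRing R] (f : ℕ → R) : ℕ → R :=
  fun n => match n with
  | 0 => 0
  | n + 1 => f n

/-- The shift operator `s_q`, corresponding to `f(x,q) ↦ f(qx,q)`. -/
def qshift {R : Type*} [CommRing R] (q : R) (f : ℕ → R) : ℕ → R :=
  fun n => q ^ n * f n

/-- `∫_q` is a twisted Rota-Baxter operator:
`(∫_q f)(∫_q g) = ∫_q((∫_q f) g) + ∫_q(f · s_q(∫_q g))`. -/
theorem qint_twisted_rotaBaxter {R : Type*} [CommRing R] (q : R) (f g : ℕ → R) :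
    qconv q (qint f) (qint g) =
      qint (qconv q (qint f) g) + qint (qconv q f (qshift q (qint g))) := by
  funext n
  match n with
  | 0 => simp [qconv, qint, qbinom]
  | n + 1 =>
    show qconv q (qint f) (qint g) (n + 1)
        = qconv q (qint f) g n + qconv q f (qshift q (qint g)) n
    unfold qconv qshift
    rw [Finset.sum_range_succ' (fun k =>
        qbinom q (n + 1) k * qint f k * qint g (n + 1 - k)) (n + 1)]
    rw [Finset.sum_range_succ (fun k =>
        qbinom q (n + 1) (k + 1) * qint f (k + 1) * qint g (n + 1 - (k + 1))) n]
    rw [Finset.sum_range_succ' (fun k => qbinom q n k * qint f k * g (n - k)) n]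
    rw [Finset.sum_range_succ (fun k =>
        qbinom q n k * f k * (q ^ (n - k) * qint g (n - k))) n]
    simp only [qint, Nat.sub_self, mul_zero, zero_mul, add_zero, zero_add]
    rw [← Finset.sum_add_distrib]
    apply Finset.sum_congr rfl
    intro k hk
    have hk' : k < n := Finset.mem_range.mp hk
    have h1 : n + 1 - (k + 1) = (n - (k + 1)) + 1 := by omega
    have h2 : n - k = (n - (k + 1)) + 1 := by omega
    rw [h1, h2]
    show (qbinom q n (k + 1) + q ^ (n - k) * qbinom q n k) * f k * g (n - (k + 1)) = _
    rw [h2]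
    ring
end
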